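/- Let (G,σ) be a signed graph with χ_sym(G,σ) = t + 2k (t maximum) and let c be a corresponding minimal proper S_{2k}^t-coloring with self-inverse colors 0_1,…,0_t and non-self-inverse color pairs ±s_1,…,±s_k. For any p ∈ {0,…,t} and q ∈ {0,…,k}, let I_p be the union of any p of the self-inverse color classes, S_q the union of any q of the non-self-inverse color classes, and (H_{p,q}, σ_{p,q}) the signed subgraph of (G,σ) induced by I_p ∪ S_q. Then χ_sym(H_{p,q}, σ_{p,q}) = χ^p_sym(H_{p,q}, σ_{p,q}) = p + 2q. -/

import Mathlib

/-!
Common framework for symmetric-set colorings of signed graphs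
(C. Cappello, E. Steffen, "Symmetric set coloring of signed graphs").

* A signed graph is a `SimpleGraph V` together with a signature
  `σ : Sym2 V → Bool` (`true` = positive edge, `false` = negative edge);
  only the values of `σ` on edges of `G` matter.
* The canonical symmetric set `S_{2k}^t` with `t` self-inverse elements and
  `k` pairs of non-self-inverse elements is `Sym t k := Fin t ⊕ Fin k × Bool`,
  with negation `symNeg` fixing the `Fin t` part and swapping the Boolean.
-/

namespace SymSet

/-- The canonical symmetric set `S_{2k}^t`. -/
abbrev Sym (t k : ℕ) := Fin t ⊕ Fin k × Bool

/-- Negation on the symmetric set: self-inverse elements are fixed,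
the two elements of each pair are exchanged. -/
def symNeg {t k : ℕ} : Sym t k → Sym t k
  | .inl i => .inl i
  | .inr (i, b) => .inr (i, !b)

/-- Action of a sign on a color: a positive sign acts trivially,
a negative sign acts by negation. -/
def signAct {t k : ℕ} (s : Bool) (x : Sym t k) : Sym t k :=
  if s then x else symNeg x

variable {V : Type*}

/-- A proper `S_{2k}^t`-coloring of the signed graph `(G, σ)`:
`c v ≠ σ(e) · c w` for every edge `e = vw`. -/
def IsProperColoring (G : SimpleGraph V) (σ : Sym2 V → Bool) {t k : ℕ}
    (c : V → Sym t k) : Prop :=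
  ∀ ⦃v w : V⦄, G.Adj v w → c v ≠ signAct (σ s(v, w)) (c w)

/-- `(G, σ)` admits a proper `S_{2k}^t`-coloring. -/
def SymColorable (G : SimpleGraph V) (σ : Sym2 V → Bool) (t k : ℕ) : Prop :=
  ∃ c : V → Sym t k, IsProperColoring G σ c

/-- The symset `t`-chromatic number `χ^t_sym(G, σ)`: the least `t + 2k`
such that `(G, σ)` admits a proper `S_{2k}^t`-coloring. -/
noncomputable def symChromT (G : SimpleGraph V) (σ : Sym2 V → Bool) (t : ℕ) : ℕ :=
  sInf {n | ∃ k, n = t + 2 * k ∧ SymColorable G σ t k}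

/-- The chromatic number of the underlying graph, as a natural number. -/
noncomputable def chrom (G : SimpleGraph V) : ℕ := G.chromaticNumber.toNat

/-- The symset chromatic number `χ_sym(G, σ)`: the minimum of
`χ^t_sym(G, σ)` over `0 ≤ t ≤ χ(G)`. -/
noncomputable def symChrom (G : SimpleGraph V) (σ : Sym2 V → Bool) : ℕ :=
  sInf {n | ∃ t ≤ chrom G, n = symChromT G σ t}

/-- Switching a signature at the vertex set `X = {v | X v = true}`:
the sign of every edge with exactly one end in `X` is reversed. -/
def switch (X : V → Bool) (σ : Sym2 V → Bool) : Sym2 V → Bool :=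
  fun e =>
    xor (Sym2.lift ⟨fun u v => xor (X u) (X v), fun u v => by simp [Bool.xor_comm]⟩ e) (σ e)

/-- Two signatures of `G` are equivalent if one is obtained from the other by a
switching (equality of signs is only required on the edges of `G`). -/
def Equivalent (G : SimpleGraph V) (σ σ' : Sym2 V → Bool) : Prop :=
  ∃ X : V → Bool, ∀ e ∈ G.edgeSet, σ' e = switch X σ e

/-- The number of negative edges of a closed walk. -/
def negCount (σ : Sym2 V → Bool) {G : SimpleGraph V} {u : V} (w : G.Walk u u) : ℕ :=
  (w.edges.filter (fun e => !σ e)).length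

/-- `(G, σ)` is balanced: every circuit has sign `+1`,
i.e. an even number of negative edges. -/
def Balanced (G : SimpleGraph V) (σ : Sym2 V → Bool) : Prop :=
  ∀ ⦃u : V⦄ (w : G.Walk u u), w.IsCycle → Even (negCount σ w)

/-- `(G, σ)` is antibalanced: every even circuit has sign `+1` and every odd
circuit has sign `-1`. -/
def Antibalanced (G : SimpleGraph V) (σ : Sym2 V → Bool) : Prop :=
  ∀ ⦃u : V⦄ (w : G.Walk u u), w.IsCycle → (Even w.length ↔ Even (negCount σ w))

/-- Restriction of a signature to (the induced subgraph on) a vertex subset. -/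
def restrict (σ : Sym2 V → Bool) (s : Set V) : Sym2 s → Bool :=
  fun e => σ (Sym2.map Subtype.val e)

/-- A circuit: a connected 2-regular graph. -/
def IsCircuit (G : SimpleGraph V) [Fintype V] [DecidableRel G.Adj] : Prop :=
  G.Connected ∧ G.IsRegularOfDegree 2

/-- The frustration index `l(G, σ)`: the least number of edges whose deletion
makes the signed graph balanced. -/
noncomputable def frustrationIndex (G : SimpleGraph V) (σ : Sym2 V → Bool) : ℕ :=
  sInf {n | ∃ F : Finset (Sym2 V), F.card = n ∧ Balanced (G.deleteEdges ↑F) σ}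

/-- A proper coloring of the signed expansion `±G` (each edge of `G` replaced by
a positive and a negative parallel edge): for each edge `vw` of `G`,
`c v ∉ {c w, -c w}`. -/
def IsProperExpColoring (G : SimpleGraph V) {t k : ℕ} (c : V → Sym t k) : Prop :=
  ∀ ⦃v w : V⦄, G.Adj v w → c v ≠ c w ∧ c v ≠ symNeg (c w)

/-- The symset `t`-chromatic number of the signed expansion `±G`. -/
noncomputable def expSymChromT (G : SimpleGraph V) (t : ℕ) : ℕ :=
  sInf {n | ∃ k, n = t + 2 * k ∧ ∃ c : V → Sym t k, IsProperExpColoring G c}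

end SymSet

/-!
Restricting `c` to the selected classes and renumbering their colors gives a proper
`S_{2q}^p`-coloring of `(H_{p,q}, σ_{p,q})`. Conversely, a proper `S_{2k'}^{t'}`-coloring of
`(H_{p,q}, σ_{p,q})` with `t' + 2k' < p + 2q`, written in fresh colors and combined with `c` on the
other classes, would be a proper coloring of `(G, σ)` with
`(t - p + t') + 2(k - q + k') < χ_sym(G, σ)` colors; as `χ_sym(G, σ) ≤ χ(G)`, its number of
self-inverse colors is admissible, a contradiction. So `p + 2q` colors are fewest among all proper
colorings of `(H_{p,q}, σ_{p,q})`, which forces both chromatic numbers to be `p + 2q`.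
-/

namespace SymSet

section

variable {V : Type*} {G : SimpleGraph V} {σ : Sym2 V → Bool} {t k t' k' : ℕ}

/-- `c ⁻¹' colorSet P Q` is, definitionally, the vertex set `I_p ∪ S_q` of `H_{p,q}`. -/
def colorSet (A : Finset (Fin t)) (B : Finset (Fin k)) : Set (Sym t k) :=
  {x | (∃ i ∈ A, x = .inl i) ∨ ∃ j ∈ B, ∃ b, x = .inr (j, b)}

section colorSet

variable {A : Finset (Fin t)} {B : Finset (Fin k)}

@[simp]
lemma inl_mem_colorSet {i : Fin t} : (.inl i : Sym t k) ∈ colorSet A B ↔ i ∈ A := by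
  simp [colorSet]

@[simp]
lemma inr_mem_colorSet {j : Fin k} {b : Bool} :
    (.inr (j, b) : Sym t k) ∈ colorSet A B ↔ j ∈ B := by
  refine ⟨?_, fun hj => .inr ⟨j, hj, b, rfl⟩⟩
  rintro (⟨_, _, h⟩ | ⟨_, hj, _, h⟩) <;> cases h
  exact hj

lemma signAct_mem_colorSet {x : Sym t k} (s : Bool) (hx : x ∈ colorSet A B) :
    signAct s x ∈ colorSet A B := by
  rcases s with _ | _ <;> rcases x with i | ⟨j, b⟩ <;> simpa [signAct, symNeg] using hx

variable (A B) in
noncomputable def compress : (x : Sym t k) → x ∈ colorSet A B → Sym A.card B.card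
  | .inl i, h => .inl (A.equivFin ⟨i, inl_mem_colorSet.1 h⟩)
  | .inr (j, b), h => .inr (B.equivFin ⟨j, inr_mem_colorSet.1 h⟩, b)

lemma compress_signAct (s : Bool) {x : Sym t k} (hx : x ∈ colorSet A B)
    (hsx : signAct s x ∈ colorSet A B) :
    compress A B (signAct s x) hsx = signAct s (compress A B x hx) := by
  rcases s with _ | _ <;> rcases x with i | ⟨j, b⟩ <;> rfl

lemma eq_of_compress_eq {x y : Sym t k} {hx : x ∈ colorSet A B} {hy : y ∈ colorSet A B}
    (h : compress A B x hx = compress A B y hy) : x = y := by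
  rcases x with i | ⟨j, b⟩ <;> rcases y with i' | ⟨j', b'⟩ <;>
    simp only [compress, Sum.inl.injEq, Sum.inr.injEq, Prod.mk.injEq, reduceCtorEq,
      EmbeddingLike.apply_eq_iff_eq, Subtype.mk.injEq] at h ⊢
  all_goals simpa using h

end colorSet

lemma signAct_inl (s : Bool) (i : Fin t) : signAct s (.inl i : Sym t k) = .inl i := by
  cases s <;> rfl

def symMap (f : Fin t → Fin t') (g : Fin k → Fin k') : Sym t k → Sym t' k' :=
  Sum.map f (Prod.map g id)

lemma signAct_symMap (f : Fin t → Fin t') (g : Fin k → Fin k') (s : Bool) (x : Sym t k) :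
    signAct s (symMap f g x) = symMap f g (signAct s x) := by
  rcases s with _ | _ <;> rcases x with i | ⟨j, b⟩ <;> rfl

lemma symMap_injective {f : Fin t → Fin t'} {g : Fin k → Fin k'}
    (hf : Function.Injective f) (hg : Function.Injective g) :
    Function.Injective (symMap f g) :=
  Sum.map_injective.2 ⟨hf, hg.prodMap Function.injective_id⟩

lemma symMap_castAdd_ne_symMap_natAdd (x : Sym t' k') (y : Sym t k) :
    symMap (Fin.castAdd t) (Fin.castAdd k) x ≠ symMap (Fin.natAdd t') (Fin.natAdd k') y := by
  rcases x with i | ⟨j, b⟩ <;> rcases y with i' | ⟨j', b'⟩ <;>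
    simp [symMap, Fin.ext_iff] <;> omega

lemma IsProperColoring.induce {c : V → Sym t k} (hc : IsProperColoring G σ c) (W : Set V) :
    IsProperColoring (G.induce W) (restrict σ W) (fun v => c v) :=
  fun _ _ hvw => hc hvw

lemma IsProperColoring.symColorable_card {c : V → Sym t k} (hc : IsProperColoring G σ c)
    {A : Finset (Fin t)} {B : Finset (Fin k)} (hcA : ∀ v, c v ∈ colorSet A B) :
    SymColorable G σ A.card B.card := by
  refine ⟨fun v => compress A B (c v) (hcA v), fun v w hvw h => hc hvw ?_⟩
  refine eq_of_compress_eq (hx := hcA v) (hy := signAct_mem_colorSet _ (hcA w)) ?_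
  rwa [compress_signAct _ (hcA w)]

lemma IsProperColoring.piecewise {c : V → Sym t k} (hc : IsProperColoring G σ c)
    {W : Set V} [DecidablePred (· ∈ W)] {c' : W → Sym t' k'}
    (hc' : IsProperColoring (G.induce W) (restrict σ W) c') :
    IsProperColoring G σ fun v => if h : v ∈ W then
      symMap (Fin.castAdd t) (Fin.castAdd k) (c' ⟨v, h⟩)
    else symMap (Fin.natAdd t') (Fin.natAdd k') (c v) := by
  intro v w hvw
  by_cases hv : v ∈ W <;> by_cases hw : w ∈ W <;>
    simp only [hv, hw, dite_true, dite_false, signAct_symMap]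
  · exact (symMap_injective (Fin.castAdd_injective _ _) (Fin.castAdd_injective _ _)).ne
      (hc' (v := ⟨v, hv⟩) (w := ⟨w, hw⟩) hvw)
  · exact symMap_castAdd_ne_symMap_natAdd _ _
  · exact (symMap_castAdd_ne_symMap_natAdd _ _).symm
  · exact (symMap_injective (Fin.natAdd_injective _ _) (Fin.natAdd_injective _ _)).ne (hc hvw)

lemma card_castAdd_union_natAdd {m n : ℕ} (S : Finset (Fin m)) :
    (Finset.univ.map (Fin.castAddEmb m) ∪ S.map (Fin.natAddEmb n)).card = n + S.card := by
  rw [Finset.card_union_of_disjoint, Finset.card_map, Finset.card_map, Finset.card_univ,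
    Fintype.card_fin]
  simp only [Finset.disjoint_left, Finset.mem_map, Finset.mem_univ, true_and, Fin.coe_castAddEmb,
    Fin.natAddEmb_apply, Fin.ext_iff, Fin.val_castAdd, Fin.val_natAdd, not_exists, not_and,
    forall_exists_index]
  omega

lemma IsProperColoring.symColorable_of_induce {c : V → Sym t k} (hc : IsProperColoring G σ c)
    (P : Finset (Fin t)) (Q : Finset (Fin k))
    (hH : SymColorable (G.induce (c ⁻¹' colorSet P Q)) (restrict σ (c ⁻¹' colorSet P Q)) t' k') :
    SymColorable G σ (t' + Pᶜ.card) (k' + Qᶜ.card) := by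
  classical
  obtain ⟨c', hc'⟩ := hH
  rw [← card_castAdd_union_natAdd Pᶜ, ← card_castAdd_union_natAdd Qᶜ]
  refine (hc.piecewise hc').symColorable_card fun v => ?_
  by_cases hv : v ∈ c ⁻¹' colorSet P Q
  · simp only [hv, dite_true]
    rcases c' ⟨v, hv⟩ with i | ⟨j, b⟩ <;> simp [symMap]
  · simp only [hv, dite_false]
    rcases hcv : c v with i | ⟨j, b⟩ <;> simp_all [symMap]

lemma symChromT_le (h : SymColorable G σ t k) : symChromT G σ t ≤ t + 2 * k :=
  Nat.sInf_le ⟨k, rfl, h⟩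

lemma symChrom_le_symChromT (h : t ≤ chrom G) : symChrom G σ ≤ symChromT G σ t :=
  Nat.sInf_le ⟨t, h, rfl⟩

variable (G σ t) in
lemma symColorable_natCard [Finite V] : SymColorable G σ t (Nat.card V) := by
  refine ⟨fun v => .inr (Finite.equivFin V v, true), fun v w hvw h => ?_⟩
  cases hσ : σ s(v, w) <;>
    simp only [signAct, hσ, Bool.false_eq_true, ↓reduceIte, symNeg, Bool.not_true, Sum.inr.injEq,
      Prod.mk.injEq, EmbeddingLike.apply_eq_iff_eq, Bool.true_eq_false, and_false, and_true] at h
  exact hvw.ne h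

lemma le_symChromT [Finite V] {n : ℕ} (h : ∀ k, SymColorable G σ t k → n ≤ t + 2 * k) :
    n ≤ symChromT G σ t :=
  le_csInf ⟨_, _, rfl, symColorable_natCard G σ t⟩ fun _ ⟨k, hk, hcol⟩ => hk ▸ h k hcol

lemma le_symChrom {n : ℕ} (h : ∀ t ≤ chrom G, n ≤ symChromT G σ t) : n ≤ symChrom G σ :=
  le_csInf ⟨_, 0, Nat.zero_le _, rfl⟩ fun _ ⟨t, ht, hn⟩ => hn ▸ h t ht

variable (G σ) in
lemma symChrom_le_chrom [Finite V] : symChrom G σ ≤ chrom G := by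
  obtain ⟨C⟩ := G.colorable_chromaticNumber_of_fintype
  have hcol : SymColorable G σ (chrom G) 0 :=
    ⟨fun v => .inl (C v), fun v w hvw h =>
      C.valid hvw (Sum.inl_injective (h.trans (signAct_inl _ _)))⟩
  simpa using (symChrom_le_symChromT le_rfl).trans (symChromT_le hcol)

lemma symChrom_eq_of_forall_symColorable_le [Finite V] (hcol : SymColorable G σ t k)
    (hmin : ∀ t' k', SymColorable G σ t' k' → t + 2 * k ≤ t' + 2 * k') :
    symChrom G σ = t + 2 * k ∧ symChromT G σ t = t + 2 * k := by
  have hT : ∀ t', t + 2 * k ≤ symChromT G σ t' := fun t' => le_symChromT (hmin t')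
  have hS : t + 2 * k ≤ symChrom G σ := le_symChrom fun t' _ => hT t'
  have ht : t ≤ chrom G := by have := symChrom_le_chrom G σ; omega
  exact ⟨le_antisymm ((symChrom_le_symChromT ht).trans (symChromT_le hcol)) hS,
    le_antisymm (symChromT_le hcol) (hT t)⟩

lemma card_add_two_mul_card_le [Finite V] {c : V → Sym t k} (hσ : symChrom G σ = t + 2 * k) (hc : IsProperColoring G σ c)
    (P : Finset (Fin t)) (Q : Finset (Fin k))
    (hH : SymColorable (G.induce (c ⁻¹' colorSet P Q)) (restrict σ (c ⁻¹' colorSet P Q)) t' k') :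
    P.card + 2 * Q.card ≤ t' + 2 * k' := by
  by_contra! hlt
  have hG := hc.symColorable_of_induce P Q hH
  have hP := P.card_le_univ
  have hQ := Q.card_le_univ
  have hchrom := symChrom_le_chrom G σ
  simp only [Finset.card_compl, Fintype.card_fin] at hG hP hQ
  have := (symChrom_le_symChromT (by omega)).trans (symChromT_le hG)
  omega

end

theorem stmt18_general {V : Type*} [Fintype V] (G : SimpleGraph V) (σ : Sym2 V → Bool)
    (t k : ℕ) (h1 : symChrom G σ = t + 2 * k)
    (c : V → Sym t k) (hc : IsProperColoring G σ c)
    (P : Finset (Fin t)) (Q : Finset (Fin k)) :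
    symChrom
        (G.induce {v | (∃ i ∈ P, c v = Sum.inl i) ∨ ∃ j ∈ Q, ∃ b, c v = Sum.inr (j, b)})
        (restrict σ {v | (∃ i ∈ P, c v = Sum.inl i) ∨ ∃ j ∈ Q, ∃ b, c v = Sum.inr (j, b)})
      = P.card + 2 * Q.card ∧
    symChromT
        (G.induce {v | (∃ i ∈ P, c v = Sum.inl i) ∨ ∃ j ∈ Q, ∃ b, c v = Sum.inr (j, b)})
        (restrict σ {v | (∃ i ∈ P, c v = Sum.inl i) ∨ ∃ j ∈ Q, ∃ b, c v = Sum.inr (j, b)})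
        P.card
      = P.card + 2 * Q.card :=
  symChrom_eq_of_forall_symColorable_le
    ((hc.induce (c ⁻¹' colorSet P Q)).symColorable_card fun v => v.2)
    fun _ _ => card_add_two_mul_card_le h1 hc P Q

/-- let `χ_sym(G,σ) = t + 2k` (`t` maximum) and let `c` be a
corresponding minimal proper `S_{2k}^t`-coloring. For any choice of `p` of the
self-inverse color classes (indexed by `P`) and `q` of the non-self-inverse
color classes (indexed by `Q`), the signed subgraph `(H_{p,q}, σ_{p,q})`
induced by their union satisfies
`χ_sym(H_{p,q}, σ_{p,q}) = χ^p_sym(H_{p,q}, σ_{p,q}) = p + 2q`. -/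
theorem stmt18 {V : Type*} [Fintype V] (G : SimpleGraph V) (σ : Sym2 V → Bool)
    (t k : ℕ) (h1 : symChrom G σ = t + 2 * k) (h2 : t ≤ chrom G)
    (h4 : ∀ t', t' ≤ chrom G → symChromT G σ t' = symChrom G σ → t' ≤ t)
    (c : V → Sym t k) (hc : IsProperColoring G σ c)
    (P : Finset (Fin t)) (Q : Finset (Fin k)) :
    symChrom
        (G.induce {v | (∃ i ∈ P, c v = Sum.inl i) ∨ ∃ j ∈ Q, ∃ b, c v = Sum.inr (j, b)})
        (restrict σ {v | (∃ i ∈ P, c v = Sum.inl i) ∨ ∃ j ∈ Q, ∃ b, c v = Sum.inr (j, b)})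
      = P.card + 2 * Q.card ∧
    symChromT
        (G.induce {v | (∃ i ∈ P, c v = Sum.inl i) ∨ ∃ j ∈ Q, ∃ b, c v = Sum.inr (j, b)})
        (restrict σ {v | (∃ i ∈ P, c v = Sum.inl i) ∨ ∃ j ∈ Q, ∃ b, c v = Sum.inr (j, b)})
        P.card
      = P.card + 2 * Q.card :=
  stmt18_general G σ t k h1 c hc P Q

end SymSet
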